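/- arXiv:2504.16730 — 2 statements merged into one kernel-verified Lean document; each statement's English description precedes it below -/
import Mathlib

section
/- Let Λ be a nondegenerate even lattice and ρ ∈ Λ a primitive vector with ⟨ρ,ρ⟩ ≠ 0 and divisibility e = div_Λ(ρ). Set L = ρ^⊥ ∩ Λ and K = ℤρ. Then the index of the sublattice L ⊕ K in Λ equals |⟨ρ,ρ⟩|/e. -/
/-- For a nondegenerate even lattice `Λ` and a primitive vector `ρ ∈ Λ` with `⟨ρ,ρ⟩ ≠ 0`
and divisibility `e`, the index of the sublattice `L ⊕ K` in `Λ`, where `L = ρ^⊥ ∩ Λ` and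
`K = ℤρ`, equals `|⟨ρ,ρ⟩|/e`. -/
theorem stmt1 {V : Type*} [AddCommGroup V] [Module ℚ V]
    (B : V →ₗ[ℚ] V →ₗ[ℚ] ℚ)
    (hsymm : ∀ x y : V, B x y = B y x)
    (Λ : Submodule ℤ V)
    (hfree : Module.Free ℤ Λ) (hfin : Module.Finite ℤ Λ)
    (hspan : Submodule.span ℚ (Λ : Set V) = ⊤)
    (hint : ∀ v ∈ Λ, ∀ w ∈ Λ, ∃ n : ℤ, B v w = n)
    (heven : ∀ v ∈ Λ, ∃ n : ℤ, B v v = 2 * n)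
    (hnondeg : ∀ v ∈ Λ, (∀ w ∈ Λ, B v w = 0) → v = 0)
    (ρ : V) (hρ : ρ ∈ Λ)
    (hρρ : B ρ ρ ≠ 0)
    (hprim : ∀ (n : ℤ) (w : V), w ∈ Λ → ρ = n • w → IsUnit n)
    (e : ℕ) (he : 0 < e)
    (hgen_dvd : ∀ w ∈ Λ, ∃ n : ℤ, B ρ w = (e : ℚ) * n)
    (hgen_mem : ∃ w ∈ Λ, B ρ w = (e : ℚ))
    (L K : Submodule ℤ V)
    (hL : ∀ v : V, v ∈ L ↔ v ∈ Λ ∧ B v ρ = 0)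
    (hK : ∀ v : V, v ∈ K ↔ ∃ n : ℤ, v = n • ρ) :
    (((L ⊔ K).toAddSubgroup.relIndex Λ.toAddSubgroup : ℚ)) = |B ρ ρ| / (e : ℚ) := by
  classical
  have he' : (e : ℚ) ≠ 0 := by exact_mod_cast he.ne'
  choose F hF using hgen_dvd
  set m : ℤ := F ρ hρ with hmF
  have hm : B ρ ρ = (e : ℚ) * m := hF ρ hρ
  have hm0 : m ≠ 0 := by
    intro h
    apply hρρ
    rw [hm, h]; simp
  set M := m.natAbs with hM
  -- F is "additive" and "ℤ-linear"
  have hFval : ∀ v (hv : v ∈ Λ), (F v hv : ℚ) = B ρ v / e := by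
    intro v hv
    rw [hF v hv]
    field_simp
  have hFsmul : ∀ (k : ℤ) v (hv : v ∈ Λ) (hkv : k • v ∈ Λ), F (k • v) hkv = k * F v hv := by
    intro k v hv hkv
    have h1 := hFval (k • v) hkv
    have h2 : B ρ (k • v) = (k : ℚ) * B ρ v := by
      rw [map_zsmul]; push_cast [zsmul_eq_mul]; ring
    have : (F (k • v) hkv : ℚ) = ((k * F v hv : ℤ) : ℚ) := by
      rw [h1, h2]; push_cast [hFval v hv]; ring
    exact_mod_cast this
  -- the homomorphism
  let g : Λ.toAddSubgroup →+ ZMod M :=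
  { toFun := fun v => ((F v.1 v.2 : ℤ) : ZMod M)
    map_zero' := by
      have : (F (0 : V) Λ.zero_mem : ℚ) = 0 := by rw [hFval]; simp
      have h0 : F (0 : V) Λ.zero_mem = 0 := by exact_mod_cast this
      simp [h0]
    map_add' := by
      intro v w
      have : (F (v.1 + w.1) (Λ.add_mem v.2 w.2) : ℚ)
          = ((F v.1 v.2 + F w.1 w.2 : ℤ) : ℚ) := by
        rw [hFval, map_add]; push_cast [hFval v.1 v.2, hFval w.1 w.2]; ring
      have h : F (v.1 + w.1) (Λ.add_mem v.2 w.2) = F v.1 v.2 + F w.1 w.2 := by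
        exact_mod_cast this
      show ((F (v.1 + w.1) _ : ℤ) : ZMod M) = _
      rw [h]; push_cast; ring }
  -- kernel
  have hker : g.ker = (L ⊔ K).toAddSubgroup.addSubgroupOf Λ.toAddSubgroup := by
    ext ⟨v, hv⟩
    simp only [AddMonoidHom.mem_ker, AddSubgroup.mem_addSubgroupOf,
      Submodule.mem_toAddSubgroup, g, AddMonoidHom.coe_mk, ZeroHom.coe_mk]
    rw [ZMod.intCast_zmod_eq_zero_iff_dvd, hM, Int.natAbs_dvd]
    constructor
    · rintro ⟨n, hn⟩
      have hnρ : (n • ρ : V) ∈ Λ := Λ.smul_mem n hρ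
      have hlΛ : v - n • ρ ∈ Λ := Λ.sub_mem hv hnρ
      have hBl : B (v - n • ρ) ρ = 0 := by
        rw [hsymm]
        have : B ρ (v - n • ρ) = B ρ v - (n : ℚ) * B ρ ρ := by
          rw [map_sub, map_zsmul, zsmul_eq_mul]; try push_cast; try ring
        rw [this, hF v hv, hn, hm]; push_cast; ring
      refine Submodule.mem_sup.mpr ⟨v - n • ρ, (hL _).mpr ⟨hlΛ, hBl⟩,
        n • ρ, (hK _).mpr ⟨n, rfl⟩, by abel⟩
    · intro hmem
      obtain ⟨l, hl, k, hk, hlk⟩ := Submodule.mem_sup.mp hmem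
      obtain ⟨hlΛ, hBl⟩ := (hL l).mp hl
      obtain ⟨n, rfl⟩ := (hK k).mp hk
      refine ⟨n, ?_⟩
      have : (F v hv : ℚ) = ((m * n : ℤ) : ℚ) := by
        rw [hFval, ← hlk, map_add, hsymm ρ l, hBl, map_zsmul, zsmul_eq_mul, hm]
        push_cast; field_simp; try ring
      exact_mod_cast this
  -- surjectivity
  obtain ⟨w, hw, hww⟩ := hgen_mem
  have hFw : F w hw = 1 := by
    have : (F w hw : ℚ) = 1 := by rw [hFval, hww]; field_simp
    exact_mod_cast this
  have hsurj : Function.Surjective g := by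
    intro c
    obtain ⟨k, rfl⟩ := ZMod.intCast_surjective c
    refine ⟨k • ⟨w, hw⟩, ?_⟩
    show ((F (k • w) _ : ℤ) : ZMod M) = _
    rw [hFsmul k w hw (Λ.smul_mem k hw), hFw]
    push_cast; ring
  -- index computation
  have hidx : (L ⊔ K).toAddSubgroup.relIndex Λ.toAddSubgroup = M := by
    have : (L ⊔ K).toAddSubgroup.relIndex Λ.toAddSubgroup
        = ((L ⊔ K).toAddSubgroup.addSubgroupOf Λ.toAddSubgroup).index := rfl
    rw [this, ← hker, AddSubgroup.index_ker,
      AddMonoidHom.range_eq_top.mpr hsurj]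
    have h2 : Nat.card (⊤ : AddSubgroup (ZMod M)) = Nat.card (ZMod M) :=
      Nat.card_congr AddSubgroup.topEquiv.toEquiv
    rw [h2, Nat.card_zmod]
  rw [hidx, hm]
  rw [abs_mul, abs_of_nonneg (show (0:ℚ) ≤ (e:ℚ) by positivity),
    mul_div_cancel_left₀ _ he', hM, Nat.cast_natAbs]
  push_cast
  try ring
end

section
/- Let Λ be a nondegenerate even lattice, ρ ∈ Λ primitive with q(ρ) < 0, e = div_Λ(ρ), m = −q(ρ)/e², and L = ρ^⊥ ∩ Λ. Then the discriminant of L satisfies disc(L) = 2m · disc(Λ), where disc denotes the absolute value of the determinant of a Gram matrix. -/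
/-- For a nondegenerate even lattice `Λ`, a primitive `ρ ∈ Λ` with `q(ρ) < 0`,
`e = div_Λ(ρ)`, `m = −q(ρ)/e²`, and `L = ρ^⊥ ∩ Λ`, the discriminants (absolute values
of Gram determinants, with respect to any `ℤ`-bases) satisfy `disc(L) = 2m · disc(Λ)`. -/
theorem stmt9 {V : Type*} [AddCommGroup V] [Module ℚ V]
    (B : V →ₗ[ℚ] V →ₗ[ℚ] ℚ)
    (hsymm : ∀ x y : V, B x y = B y x)
    (Λ : Submodule ℤ V)
    (hspan : Submodule.span ℚ (Λ : Set V) = ⊤)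
    (hint : ∀ v ∈ Λ, ∀ w ∈ Λ, ∃ n : ℤ, B v w = n)
    (heven : ∀ v ∈ Λ, ∃ n : ℤ, B v v = 2 * n)
    (hnondeg : ∀ v ∈ Λ, (∀ w ∈ Λ, B v w = 0) → v = 0)
    (ρ : V) (hρ : ρ ∈ Λ)
    (hqρ : B ρ ρ / 2 < 0)
    (hprim : ∀ (n : ℤ) (w : V), w ∈ Λ → ρ = n • w → IsUnit n)
    (e : ℕ) (he : 0 < e)
    (hgen_dvd : ∀ w ∈ Λ, ∃ n : ℤ, B ρ w = (e : ℚ) * n)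
    (hgen_mem : ∃ w ∈ Λ, B ρ w = (e : ℚ))
    (m : ℚ) (hm : m = -(B ρ ρ / 2) / (e : ℚ) ^ 2)
    (L : Submodule ℤ V)
    (hL : ∀ v : V, v ∈ L ↔ v ∈ Λ ∧ B v ρ = 0)
    {ι ιL : Type*} [Fintype ι] [DecidableEq ι] [Fintype ιL] [DecidableEq ιL]
    (bΛ : Module.Basis ι ℤ Λ) (bL : Module.Basis ιL ℤ L) :
    |Matrix.det (Matrix.of fun i j => B (bL i : V) (bL j : V))| =
      2 * m * |Matrix.det (Matrix.of fun i j => B (bΛ i : V) (bΛ j : V))| := by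
  classical
  obtain ⟨w₀, hw₀Λ, hw₀e⟩ := hgen_mem
  have he' : (0:ℚ) < (e:ℚ) := by exact_mod_cast he
  have he0 : (e:ℚ) ≠ 0 := ne_of_gt he'
  have hLle : L ≤ Λ := fun v hv => ((hL v).mp hv).1
  have hBρL : ∀ v : V, v ∈ L → B ρ v = 0 := fun v hv => by
    rw [hsymm]; exact ((hL v).mp hv).2
  -- the candidate basis family of Λ
  set f : ιL ⊕ Unit → Λ :=
    Sum.elim (fun i => Submodule.inclusion hLle (bL i)) (fun _ => ⟨w₀, hw₀Λ⟩) with hf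
  have hfinl : ∀ i, ((f (Sum.inl i) : Λ) : V) = (bL i : V) := fun i => rfl
  have hfinr : ((f (Sum.inr ()) : Λ) : V) = w₀ := rfl
  -- linear independence
  have hind : LinearIndependent ℤ f := by
    rw [Fintype.linearIndependent_iff]
    intro g hg
    have hgV : ∑ i, g i • ((f i : Λ) : V) = 0 := by
      have := congrArg (fun x : Λ => (x : V)) hg
      simpa using this
    have hBρ0 : (g (Sum.inr ()) : ℚ) * (e : ℚ) = 0 := by
      have h0 := congrArg (fun x => B ρ x) hgV
      simp only [map_sum, map_zsmul, map_zero] at h0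
      rw [Fintype.sum_sum_type] at h0
      have hz : ∀ i : ιL, g (Sum.inl i) • B ρ ((f (Sum.inl i) : Λ) : V) = 0 := by
        intro i
        rw [hfinl i, hBρL _ (bL i).2, smul_zero]
      rw [Finset.sum_congr rfl (fun i _ => hz i)] at h0
      simpa [hfinr, hw₀e, zsmul_eq_mul] using h0
    have hginr : g (Sum.inr ()) = 0 := by
      have : (g (Sum.inr ()) : ℚ) = 0 := by
        rcases mul_eq_zero.mp hBρ0 with h | h
        · exact h
        · exact absurd h he0
      exact_mod_cast this
    have hsum : ∑ i : ιL, g (Sum.inl i) • f (Sum.inl i) = 0 := by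
      rw [Fintype.sum_sum_type] at hg
      simpa [hginr] using hg
    have hsumL : ∑ i : ιL, g (Sum.inl i) • bL i = 0 := by
      have : Submodule.inclusion hLle (∑ i : ιL, g (Sum.inl i) • bL i) = 0 := by
        rw [map_sum]
        simpa [f] using hsum
      exact (Submodule.inclusion_injective hLle) (by simpa using this)
    have hbLi := Fintype.linearIndependent_iff.mp bL.linearIndependent _ hsumL
    rintro (i | ⟨⟩)
    · exact hbLi i
    · exact hginr
  -- spanning
  have hspan' : ⊤ ≤ Submodule.span ℤ (Set.range f) := by
    rintro x -
    obtain ⟨n, hn⟩ := hgen_dvd (x : V) x.2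
    have hwmem : (⟨w₀, hw₀Λ⟩ : Λ) ∈ Submodule.span ℤ (Set.range f) :=
      Submodule.subset_span ⟨Sum.inr (), rfl⟩
    have huL : ((x - n • ⟨w₀, hw₀Λ⟩ : Λ) : V) ∈ L := by
      rw [hL]
      refine ⟨(x - n • (⟨w₀, hw₀Λ⟩:Λ) : Λ).2, ?_⟩
      rw [← hsymm]
      have : ((x - n • (⟨w₀, hw₀Λ⟩:Λ) : Λ) : V) = (x : V) - n • w₀ := by
        push_cast; ring_nf
      rw [this, map_sub, map_zsmul, hn, hw₀e]
      simp [zsmul_eq_mul, mul_comm]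
    have h2 : (x - n • ⟨w₀, hw₀Λ⟩ : Λ) ∈
        Submodule.map (Submodule.inclusion hLle) (⊤ : Submodule ℤ L) :=
      ⟨⟨_, huL⟩, trivial, rfl⟩
    rw [← bL.span_eq, Submodule.map_span] at h2
    have h3 : (Submodule.inclusion hLle) '' Set.range bL ⊆ Set.range f := by
      rintro _ ⟨_, ⟨i, rfl⟩, rfl⟩; exact ⟨Sum.inl i, rfl⟩
    have h4 := Submodule.span_mono h3 h2
    have h5 := Submodule.add_mem _ h4 (Submodule.smul_mem _ n hwmem)
    simpa using h5
  set b' : Module.Basis (ιL ⊕ Unit) ℤ Λ := Module.Basis.mk hind hspan' with hb'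
  have hb'inl : ∀ i, ((b' (Sum.inl i) : Λ) : V) = (bL i : V) := by
    intro i; rw [hb', Module.Basis.mk_apply]; rfl
  have hb'inr : ((b' (Sum.inr ()) : Λ) : V) = w₀ := by
    rw [hb', Module.Basis.mk_apply]; rfl
  -- decomposition of ρ in the basis b'
  set r : ιL ⊕ Unit → ℤ := fun j => b'.repr ⟨ρ, hρ⟩ j with hr
  set n₀ : ℤ := r (Sum.inr ()) with hn₀def
  have hρdecomp : ρ = (∑ i : ιL, r (Sum.inl i) • ((bL i : L) : V)) + n₀ • w₀ := by
    have h := congrArg (fun x : Λ => (x : V)) (b'.sum_repr ⟨ρ, hρ⟩)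
    simp only [AddSubmonoidClass.coe_finset_sum, SetLike.val_smul] at h
    rw [Fintype.sum_sum_type] at h
    simp only [hb'inl, hb'inr] at h
    rw [← h]
    simp [hr, hn₀def]
  have hBρexp : ∀ y : V, B ρ y =
      (∑ i : ιL, (r (Sum.inl i) : ℚ) * B ((bL i : L) : V) y) + (n₀ : ℚ) * B w₀ y := by
    intro y
    conv_lhs => rw [hρdecomp]
    simp only [map_add, map_sum, map_zsmul, LinearMap.add_apply, LinearMap.sum_apply,
      LinearMap.smul_apply, zsmul_eq_mul]
  have hn₀e : (n₀ : ℚ) * (e : ℚ) = B ρ ρ := by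
    have h := hBρexp ρ
    have hz : ∀ i : ιL, (r (Sum.inl i) : ℚ) * B ((bL i : L) : V) ρ = 0 := fun i => by
      rw [((hL _).mp (bL i).2).2, mul_zero]
    rw [Finset.sum_congr rfl (fun i _ => hz i), Finset.sum_const_zero, zero_add,
      hsymm w₀ ρ, hw₀e] at h
    exact h.symm
  -- Gram matrices
  set GmL : Matrix ιL ιL ℚ := Matrix.of fun i j => B ((bL i : L) : V) ((bL j : L) : V) with hGmL
  set GmA : Matrix ι ι ℚ := Matrix.of fun i j => B ((bΛ i : Λ) : V) ((bΛ j : Λ) : V) with hGmA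
  set Gm2 : Matrix (ιL ⊕ Unit) (ιL ⊕ Unit) ℚ :=
    Matrix.of fun i j => B ((b' i : Λ) : V) ((b' j : Λ) : V) with hGm2
  have hGm2blocks : Gm2 = Matrix.fromBlocks GmL (Matrix.of fun i _ => B ((bL i : L) : V) w₀)
      (Matrix.of fun _ j => B w₀ ((bL j : L) : V)) (Matrix.of fun _ _ => B w₀ w₀) := by
    ext i j
    rcases i with i | ⟨⟩ <;> rcases j with j | ⟨⟩ <;>
      simp [hGm2, hb'inl, hb'inr, hGmL]
  set E : Matrix (ιL ⊕ Unit) (ιL ⊕ Unit) ℚ :=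
    Matrix.fromBlocks 1 0 (Matrix.of fun _ j => (r (Sum.inl j) : ℚ))
      (Matrix.of fun _ _ => (n₀ : ℚ)) with hE
  have hEmul : E * Gm2 = Matrix.fromBlocks GmL (Matrix.of fun i _ => B ((bL i : L) : V) w₀) 0
      (Matrix.of fun _ _ => (e : ℚ)) := by
    rw [hGm2blocks, hE, Matrix.fromBlocks_multiply]
    ext i j
    rcases i with i | ⟨⟩ <;> rcases j with j | ⟨⟩
    · simp [Matrix.mul_apply]
    · simp [Matrix.mul_apply]
    · simp only [Matrix.fromBlocks_apply₂₁, Matrix.add_apply, Matrix.mul_apply,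
        Matrix.of_apply, Matrix.zero_apply, Finset.univ_unique, Finset.sum_singleton,
        hGmL]
      rw [← hBρexp ((bL j : L) : V), hsymm]
      exact ((hL _).mp (bL j).2).2
    · simp only [Matrix.fromBlocks_apply₂₂, Matrix.add_apply, Matrix.mul_apply,
        Matrix.of_apply, Finset.univ_unique, Finset.sum_singleton]
      rw [← hBρexp w₀, hw₀e]
  have hdetE : E.det = (n₀ : ℚ) := by
    rw [hE, Matrix.det_fromBlocks_zero₁₂, Matrix.det_one, one_mul, Matrix.det_unique]
    rfl
  have hkey : (n₀ : ℚ) * Gm2.det = GmL.det * (e : ℚ) := by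
    have h := congrArg Matrix.det hEmul
    rw [Matrix.det_mul, hdetE, Matrix.det_fromBlocks_zero₂₁,
      Matrix.det_unique (Matrix.of fun _ _ => (e : ℚ))] at h
    exact h
  -- change of basis between b' and bΛ
  set σ : (ιL ⊕ Unit) ≃ ι := b'.indexEquiv bΛ with hσ
  set intD : Matrix (ιL ⊕ Unit) (ιL ⊕ Unit) ℤ :=
    Matrix.of fun i j => bΛ.repr (b' i) (σ j) with hintD
  have hintD_eq : intD = Matrix.transpose ((bΛ.reindex σ.symm).toMatrix ⇑b') := by
    ext i j
    rw [hintD, Matrix.of_apply, Matrix.transpose_apply, Module.Basis.toMatrix_apply]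
    simp [Module.Basis.repr_reindex, Finsupp.mapDomain_equiv_apply]
  have hDet1 : IsUnit ((bΛ.reindex σ.symm).toMatrix ⇑b').det :=
    IsUnit.of_mul_eq_one _ (by
      rw [← Matrix.det_mul, Module.Basis.toMatrix_mul_toMatrix_flip, Matrix.det_one])
  have hintDdet : intD.det = 1 ∨ intD.det = -1 := by
    rw [hintD_eq, Matrix.det_transpose]
    exact Int.isUnit_iff.mp hDet1
  set D : Matrix (ιL ⊕ Unit) (ιL ⊕ Unit) ℚ := intD.map (Int.cast) with hD
  have hDdet2 : D.det ^ 2 = 1 := by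
    have hcast : D.det = ((intD.det : ℤ) : ℚ) := by
      rw [hD]
      exact (RingHom.map_det (Int.castRingHom ℚ) intD).symm
    rcases hintDdet with h | h <;> rw [hcast, h] <;> norm_num
  -- expansion of elements of Λ in bΛ
  have hexp : ∀ x : Λ, (x : V) = ∑ s : ι, ((bΛ.repr x s : ℤ) : ℚ) • ((bΛ s : Λ) : V) := by
    intro x
    have h := congrArg (fun y : Λ => (y : V)) (bΛ.sum_repr x)
    simp only [AddSubmonoidClass.coe_finset_sum, SetLike.val_smul] at h
    rw [← h]
    exact Finset.sum_congr rfl fun s _ => (Int.cast_smul_eq_zsmul ℚ _ _).symm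
  have hBexp : ∀ x y : Λ, B (x : V) (y : V) =
      ∑ s : ι, ∑ t : ι, ((bΛ.repr x s : ℤ) : ℚ) * ((bΛ.repr y t : ℤ) : ℚ) *
        B ((bΛ s : Λ) : V) ((bΛ t : Λ) : V) := by
    intro x y
    conv_lhs => rw [hexp x, hexp y]
    simp only [map_sum, map_smul, LinearMap.sum_apply, LinearMap.smul_apply, smul_eq_mul,
      Finset.mul_sum, Finset.sum_mul]
    rw [Finset.sum_comm]
    exact Finset.sum_congr rfl fun t _ => Finset.sum_congr rfl fun s _ => by ring
  have hGm2D : Gm2 = D * GmA.submatrix σ σ * Matrix.transpose D := by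
    ext i j
    show B ((b' i : Λ) : V) ((b' j : Λ) : V) = _
    rw [hBexp]
    rw [Matrix.mul_apply]
    simp only [Matrix.mul_apply, Matrix.transpose_apply, Matrix.submatrix_apply,
      hD, Matrix.map_apply, hintD, Matrix.of_apply, Finset.sum_mul, hGmA]
    rw [Finset.sum_comm]
    refine (Fintype.sum_equiv σ _ _ fun k => ?_).symm
    refine Fintype.sum_equiv σ _ _ fun l => ?_
    ring
  have hdetGm2 : Gm2.det = GmA.det := by
    rw [hGm2D, Matrix.det_mul, Matrix.det_mul, Matrix.det_transpose,
      Matrix.det_submatrix_equiv_self]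
    have : D.det * GmA.det * D.det = D.det ^ 2 * GmA.det := by ring
    rw [this, hDdet2, one_mul]
  -- final algebra
  have hBρρ : B ρ ρ < 0 := by linarith
  have hn₀neg : (n₀ : ℚ) < 0 := by nlinarith
  have h2me : 2 * m * (e : ℚ) = -(n₀ : ℚ) := by
    rw [hm, ← hn₀e]
    field_simp
  have habs : |GmL.det| * (e : ℚ) = (2 * m * (e : ℚ)) * |GmA.det| := by
    have h1 : |GmL.det * (e : ℚ)| = |(n₀ : ℚ) * GmA.det| := by
      rw [← hdetGm2, ← hkey]
    rw [abs_mul, abs_mul, abs_of_pos he', abs_of_neg hn₀neg] at h1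
    rw [h1, h2me]
  have hfin : |GmL.det| * (e : ℚ) = (2 * m * |GmA.det|) * (e : ℚ) := by
    rw [habs]; ring
  exact mul_right_cancel₀ he0 hfin
end
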